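/- The matrix identities A₀·U = U·(Q₀ + Q₁), (C₁ + C₀)·U = −U·V₀, and (C₁ − C₀)·U = U·(Q₁·J − Q₀·(J + 1)) hold, where 1 denotes the identity matrix (so that, U being invertible, U⁻¹A₀U = Q₀+Q₁, U⁻¹(C₁+C₀)U = −V₀ and U⁻¹(C₁−C₀)U = Q₁J − Q₀(J+1)). -/

import Mathlib

namespace Stmt0

/-- The matrix of Hahn polynomial values `U_{jk} = ₃F₂(-k, -j, k+1; 1, -ℓ; 1)`. -/
noncomputable def hahnU (ℓ : ℕ) : Matrix (Fin (ℓ+1)) (Fin (ℓ+1)) ℂ :=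
  Matrix.of fun j k =>
    ∑ m ∈ Finset.range (min (j:ℕ) (k:ℕ) + 1),
      ((ascPochhammer ℂ m).eval (-((k:ℕ):ℂ)) * (ascPochhammer ℂ m).eval (-((j:ℕ):ℂ)) *
        (ascPochhammer ℂ m).eval (((k:ℕ):ℂ) + 1)) /
      ((ascPochhammer ℂ m).eval 1 * (ascPochhammer ℂ m).eval (-(ℓ:ℂ)) * (Nat.factorial m : ℂ))

/-- `A₀ = Σ_j (ℓ - 2j) E_{jj}`. -/
noncomputable def A0 (ℓ : ℕ) : Matrix (Fin (ℓ+1)) (Fin (ℓ+1)) ℂ :=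
  Matrix.diagonal fun j => (ℓ:ℂ) - 2*((j:ℕ):ℂ)

/-- `C₀ = Σ_{j=1}^ℓ j(ℓ-j+1)(E_{j,j-1} - E_{jj})`. -/
noncomputable def C0 (ℓ : ℕ) : Matrix (Fin (ℓ+1)) (Fin (ℓ+1)) ℂ :=
  Matrix.of fun j k =>
    if (k:ℕ) + 1 = (j:ℕ) then ((j:ℕ):ℂ) * ((ℓ:ℂ) - ((j:ℕ):ℂ) + 1)
    else if j = k then -(((j:ℕ):ℂ) * ((ℓ:ℂ) - ((j:ℕ):ℂ) + 1))
    else 0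

/-- `C₁ = Σ_{j=0}^{ℓ-1} (j+1)(ℓ-j)(E_{j,j+1} - E_{jj})`. -/
noncomputable def C1 (ℓ : ℕ) : Matrix (Fin (ℓ+1)) (Fin (ℓ+1)) ℂ :=
  Matrix.of fun j k =>
    if (j:ℕ) + 1 = (k:ℕ) then (((j:ℕ):ℂ) + 1) * ((ℓ:ℂ) - ((j:ℕ):ℂ))
    else if j = k then -((((j:ℕ):ℂ) + 1) * ((ℓ:ℂ) - ((j:ℕ):ℂ)))
    else 0

/-- `V₀ = Σ_j j(j+1) E_{jj}`. -/
noncomputable def V0 (ℓ : ℕ) : Matrix (Fin (ℓ+1)) (Fin (ℓ+1)) ℂ :=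
  Matrix.diagonal fun j => ((j:ℕ):ℂ) * (((j:ℕ):ℂ) + 1)

/-- `J = Σ_j j E_{jj}`. -/
noncomputable def Jmat (ℓ : ℕ) : Matrix (Fin (ℓ+1)) (Fin (ℓ+1)) ℂ :=
  Matrix.diagonal fun j => ((j:ℕ):ℂ)

/-- `Q₀ = Σ_{j=0}^{ℓ-1} ((j+1)(ℓ+j+2)/(2j+3)) E_{j,j+1}`. -/
noncomputable def Q0 (ℓ : ℕ) : Matrix (Fin (ℓ+1)) (Fin (ℓ+1)) ℂ :=
  Matrix.of fun j k =>
    if (j:ℕ) + 1 = (k:ℕ) then (((j:ℕ):ℂ) + 1) * ((ℓ:ℂ) + ((j:ℕ):ℂ) + 2) / (2*((j:ℕ):ℂ) + 3)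
    else 0

/-- `Q₁ = Σ_{j=1}^{ℓ} (j(ℓ-j+1)/(2j-1)) E_{j,j-1}`. -/
noncomputable def Q1 (ℓ : ℕ) : Matrix (Fin (ℓ+1)) (Fin (ℓ+1)) ℂ :=
  Matrix.of fun j k =>
    if (k:ℕ) + 1 = (j:ℕ) then ((j:ℕ):ℂ) * ((ℓ:ℂ) - ((j:ℕ):ℂ) + 1) / (2*((j:ℕ):ℂ) - 1)
    else 0

/-! `hahnU ℓ j k = R j k` for the hypergeometric sum `R x y = ∑_{m ≤ ℓ} t_m(x, y)`, which makes
sense for complex `x, y`. Read entrywise, the three identities are contiguous relations of `R`: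
a three-term recurrence in `y`, a second-order difference equation in `x`, and a mixed relation.
The tridiagonal matrices act by shifts whose weights vanish where a shifted index would leave
`{0, …, ℓ}`, so no boundary cases arise.

Each contiguous relation is proved termwise by telescoping: the corresponding combination of
the terms `t_{m+1}` equals `G (m + 1) - G m` for an explicit certificate `G m = g(m) t_m(x, y)`.
This is checked by reducing every shifted term `t_{m+1}(x ± 1, y)`, `t_{m+1}(x, y ± 1)` to
`t_m(x, y)` via Pochhammer ratios. What survives is `G ℓ`, which vanishes at the integer points
`0 ≤ j, k ≤ ℓ`, either because `(-n)_ℓ = 0` for naturals `n < ℓ` or because `g(ℓ)` does. -/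

open Polynomial Finset Matrix

theorem ascPochhammer_eval_succ_left (m : ℕ) (z : ℂ) :
    (ascPochhammer ℂ (m + 1)).eval z = z * (ascPochhammer ℂ m).eval (z + 1) := by
  simp [ascPochhammer_succ_left, eval_comp]

theorem mul_ascPochhammer_eval_succ_add_one (m : ℕ) (z : ℂ) :
    z * (ascPochhammer ℂ (m + 1)).eval (z + 1) =
      (ascPochhammer ℂ m).eval z * (z + m) * (z + m + 1) := by
  rw [← ascPochhammer_eval_succ_left, ascPochhammer_succ_eval, ascPochhammer_succ_eval]
  push_cast
  ring

theorem ascPochhammer_eval_neg_natCast_ne_zero {m ℓ : ℕ} (h : m ≤ ℓ) :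
    (ascPochhammer ℂ m).eval (-(ℓ : ℂ)) ≠ 0 := by
  simp only [ne_eq, ascPochhammer_eval_eq_zero_iff, neg_neg, Nat.cast_inj, not_exists, not_and]
  omega

theorem sum_range_succ_eq_of_telescoping {M : Type*} [AddCommGroup M] {n : ℕ} (a G : ℕ → M)
    (h0 : a 0 = G 0) (hsucc : ∀ m < n, a (m + 1) = G (m + 1) - G m) :
    ∑ m ∈ range (n + 1), a m = G n := by
  rw [sum_range_succ', h0, sum_congr rfl fun m hm => hsucc m (mem_range.1 hm), sum_range_sub,
    sub_add_cancel]

noncomputable def hahnTerm (ℓ m : ℕ) (x y : ℂ) : ℂ :=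
  ((ascPochhammer ℂ m).eval (-y) * (ascPochhammer ℂ m).eval (-x) *
      (ascPochhammer ℂ m).eval (y + 1)) /
    ((ascPochhammer ℂ m).eval 1 * (ascPochhammer ℂ m).eval (-(ℓ : ℂ)) * (m.factorial : ℂ))

noncomputable def hahn (ℓ : ℕ) (x y : ℂ) : ℂ := ∑ m ∈ range (ℓ + 1), hahnTerm ℓ m x y

theorem hahnTerm_zero (ℓ : ℕ) (x y : ℂ) : hahnTerm ℓ 0 x y = 1 := by
  simp [hahnTerm]

theorem hahnTerm_eq_zero_of_lt_left {ℓ m j : ℕ} (h : j < m) (y : ℂ) : hahnTerm ℓ m j y = 0 := by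
  simp [hahnTerm, ascPochhammer_eval_neg_coe_nat_of_lt h]

theorem hahnTerm_eq_zero_of_lt_right {ℓ m k : ℕ} (h : k < m) (x : ℂ) :
    hahnTerm ℓ m x k = 0 := by
  simp [hahnTerm, ascPochhammer_eval_neg_coe_nat_of_lt h]

/-- The denominator of `hahnTerm ℓ (m + 1)` is that of `hahnTerm ℓ m` times `(m + 1)² (m - ℓ)`,
so a ratio of terms is read off from their numerators. -/
theorem hahnTerm_succ_mul_eq {ℓ m : ℕ} (hm : m < ℓ) {x y x' y' a c : ℂ}
    (h : a * ((ascPochhammer ℂ (m + 1)).eval (-y') * (ascPochhammer ℂ (m + 1)).eval (-x') *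
        (ascPochhammer ℂ (m + 1)).eval (y' + 1)) =
      c * ((ascPochhammer ℂ m).eval (-y) * (ascPochhammer ℂ m).eval (-x) *
        (ascPochhammer ℂ m).eval (y + 1))) :
    a * hahnTerm ℓ (m + 1) x' y' * ((m + 1) ^ 2 * (m - ℓ)) = c * hahnTerm ℓ m x y := by
  have h1 : (m : ℂ) + 1 ≠ 0 := by exact_mod_cast m.succ_ne_zero
  have h2 : (m : ℂ) - ℓ ≠ 0 := sub_ne_zero.2 (by exact_mod_cast hm.ne)
  have h3 := ascPochhammer_eval_neg_natCast_ne_zero hm.le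
  have h4 : (m.factorial : ℂ) ≠ 0 := by exact_mod_cast m.factorial_ne_zero
  have hden : (ascPochhammer ℂ (m + 1)).eval 1 * (ascPochhammer ℂ (m + 1)).eval (-(ℓ : ℂ)) *
      ((m + 1).factorial : ℂ) = (ascPochhammer ℂ m).eval 1 *
        (ascPochhammer ℂ m).eval (-(ℓ : ℂ)) * (m.factorial : ℂ) * ((m + 1) ^ 2 * (m - ℓ)) := by
    rw [ascPochhammer_succ_eval _ (1 : ℂ), ascPochhammer_succ_eval _ (-(ℓ : ℂ)),
      Nat.factorial_succ]
    push_cast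
    ring
  rw [hahnTerm, hahnTerm, hden, ← mul_div_assoc, h]
  field_simp

section Ratios

variable {ℓ m : ℕ} (hm : m < ℓ) (x y : ℂ)
include hm

theorem natCast_add_one_sq_mul_sub_ne_zero : ((m : ℂ) + 1) ^ 2 * (m - ℓ) ≠ 0 :=
  mul_ne_zero (pow_ne_zero _ (by exact_mod_cast m.succ_ne_zero))
    (sub_ne_zero.2 (by exact_mod_cast hm.ne))

theorem hahnTerm_succ_ratio :
    hahnTerm ℓ (m + 1) x y * ((m + 1) ^ 2 * (m - ℓ)) =
      (m - x) * (m - y) * (m + 1 + y) * hahnTerm ℓ m x y := by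
  refine one_mul (hahnTerm ℓ (m + 1) x y) ▸ hahnTerm_succ_mul_eq hm ?_
  rw [ascPochhammer_succ_eval, ascPochhammer_succ_eval, ascPochhammer_succ_eval]
  ring

theorem hahnTerm_succ_add_one_left_ratio :
    hahnTerm ℓ (m + 1) (x + 1) y * ((m + 1) ^ 2 * (m - ℓ)) =
      -((x + 1) * (m - y) * (m + 1 + y)) * hahnTerm ℓ m x y := by
  refine one_mul (hahnTerm ℓ (m + 1) (x + 1) y) ▸ hahnTerm_succ_mul_eq hm ?_
  rw [ascPochhammer_eval_succ_left m (-(x + 1)), show -(x + 1) + 1 = -x by ring,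
    ascPochhammer_succ_eval _ (-y), ascPochhammer_succ_eval _ (y + 1)]
  ring

theorem hahnTerm_succ_sub_one_left_ratio :
    x * hahnTerm ℓ (m + 1) (x - 1) y * ((m + 1) ^ 2 * (m - ℓ)) =
      -((m - x) * (m + 1 - x) * (m - y) * (m + 1 + y)) * hahnTerm ℓ m x y := by
  refine hahnTerm_succ_mul_eq hm ?_
  have e := mul_ascPochhammer_eval_succ_add_one m (-x)
  rw [show -x + 1 = -(x - 1) by ring] at e
  rw [ascPochhammer_succ_eval _ (-y), ascPochhammer_succ_eval _ (y + 1)]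
  linear_combination (-((ascPochhammer ℂ m).eval (-y) * (-y + m) *
    ((ascPochhammer ℂ m).eval (y + 1) * (y + 1 + m)))) * e

theorem hahnTerm_succ_add_one_right_ratio :
    hahnTerm ℓ (m + 1) x (y + 1) * ((m + 1) ^ 2 * (m - ℓ)) =
      -((m - x) * (m + 1 + y) * (m + 2 + y)) * hahnTerm ℓ m x y := by
  refine one_mul (hahnTerm ℓ (m + 1) x (y + 1)) ▸ hahnTerm_succ_mul_eq hm ?_
  have e := mul_ascPochhammer_eval_succ_add_one m (y + 1)
  rw [ascPochhammer_eval_succ_left m (-(y + 1)), show -(y + 1) + 1 = -y by ring,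
    ascPochhammer_succ_eval _ (-x)]
  linear_combination (-((ascPochhammer ℂ m).eval (-x) * (-x + m) *
    (ascPochhammer ℂ m).eval (-y))) * e

theorem hahnTerm_succ_sub_one_right_ratio :
    hahnTerm ℓ (m + 1) x (y - 1) * ((m + 1) ^ 2 * (m - ℓ)) =
      -((m - x) * (m - y) * (m + 1 - y)) * hahnTerm ℓ m x y := by
  refine one_mul (hahnTerm ℓ (m + 1) x (y - 1)) ▸ hahnTerm_succ_mul_eq hm ?_
  have e := mul_ascPochhammer_eval_succ_add_one m (-y)
  rw [show -y + 1 = -(y - 1) by ring] at e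
  rw [sub_add_cancel, ascPochhammer_eval_succ_left m y, ascPochhammer_succ_eval _ (-x)]
  linear_combination (-((ascPochhammer ℂ m).eval (-x) * (-x + m) *
    (ascPochhammer ℂ m).eval (y + 1))) * e

theorem hahnTerm_recurrence_step :
    (2 * y + 1) * (ℓ - 2 * x) * hahnTerm ℓ (m + 1) x y
        - y * (ℓ + y + 1) * hahnTerm ℓ (m + 1) x (y - 1)
        - (y + 1) * (ℓ - y) * hahnTerm ℓ (m + 1) x (y + 1) =
      -2 * (2 * y + 1) * (x - (m + 1 : ℕ)) * hahnTerm ℓ (m + 1) x y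
        - -2 * (2 * y + 1) * (x - m) * hahnTerm ℓ m x y := by
  refine mul_right_cancel₀ (natCast_add_one_sq_mul_sub_ne_zero hm) ?_
  push_cast
  linear_combination ((2 * y + 1) * (ℓ - 2 * x) + 2 * (2 * y + 1) * (x - (m + 1)))
      * hahnTerm_succ_ratio hm x y
    - y * (ℓ + y + 1) * hahnTerm_succ_sub_one_right_ratio hm x y
    - (y + 1) * (ℓ - y) * hahnTerm_succ_add_one_right_ratio hm x y

theorem hahnTerm_difference_step :
    (x + 1) * (ℓ - x) * (hahnTerm ℓ (m + 1) (x + 1) y - hahnTerm ℓ (m + 1) x y)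
        + x * (ℓ - x + 1) * (hahnTerm ℓ (m + 1) (x - 1) y - hahnTerm ℓ (m + 1) x y)
        + y * (y + 1) * hahnTerm ℓ (m + 1) x y =
      (y * (y + 1) - (m + 1 : ℕ) * ((m + 1 : ℕ) + 1)) * hahnTerm ℓ (m + 1) x y
        - (y * (y + 1) - m * (m + 1)) * hahnTerm ℓ m x y := by
  refine mul_right_cancel₀ (natCast_add_one_sq_mul_sub_ne_zero hm) ?_
  push_cast
  linear_combination (x + 1) * (ℓ - x) * hahnTerm_succ_add_one_left_ratio hm x y
    + (ℓ - x + 1) * hahnTerm_succ_sub_one_left_ratio hm x y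
    + (-(x + 1) * (ℓ - x) - x * (ℓ - x + 1) + (m + 1) * (m + 2)) * hahnTerm_succ_ratio hm x y

theorem hahnTerm_mixed_step :
    (2 * y + 1) * ((x + 1) * (ℓ - x) * (hahnTerm ℓ (m + 1) (x + 1) y - hahnTerm ℓ (m + 1) x y)
          - x * (ℓ - x + 1) * (hahnTerm ℓ (m + 1) (x - 1) y - hahnTerm ℓ (m + 1) x y))
        - y * (y + 1) * (ℓ - y) * hahnTerm ℓ (m + 1) x (y + 1)
        + y * (y + 1) * (ℓ + y + 1) * hahnTerm ℓ (m + 1) x (y - 1) =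
      (2 * y + 1) * (y * (y + 1) - 2 * (m + 1 : ℕ) * x + (m + 1 : ℕ) * ((m + 1 : ℕ) - 1))
          * hahnTerm ℓ (m + 1) x y
        - (2 * y + 1) * (y * (y + 1) - 2 * m * x + m * (m - 1)) * hahnTerm ℓ m x y := by
  refine mul_right_cancel₀ (natCast_add_one_sq_mul_sub_ne_zero hm) ?_
  push_cast
  linear_combination (2 * y + 1) * (x + 1) * (ℓ - x) * hahnTerm_succ_add_one_left_ratio hm x y
    - (2 * y + 1) * (ℓ - x + 1) * hahnTerm_succ_sub_one_left_ratio hm x y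
    + (2 * y + 1) * (-(x + 1) * (ℓ - x) + x * (ℓ - x + 1)
        - (y * (y + 1) - 2 * (m + 1) * x + (m + 1) * m)) * hahnTerm_succ_ratio hm x y
    - y * (y + 1) * (ℓ - y) * hahnTerm_succ_add_one_right_ratio hm x y
    + y * (y + 1) * (ℓ + y + 1) * hahnTerm_succ_sub_one_right_ratio hm x y

end Ratios

theorem hahn_recurrence {ℓ j : ℕ} (hj : j ≤ ℓ) (y : ℂ) :
    (2 * y + 1) * (ℓ - 2 * j) * hahn ℓ j y =
      y * (ℓ + y + 1) * hahn ℓ j (y - 1) + (y + 1) * (ℓ - y) * hahn ℓ j (y + 1) := by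
  have key := sum_range_succ_eq_of_telescoping (n := ℓ)
    (fun m => (2 * y + 1) * (ℓ - 2 * j) * hahnTerm ℓ m j y
      - y * (ℓ + y + 1) * hahnTerm ℓ m j (y - 1) - (y + 1) * (ℓ - y) * hahnTerm ℓ m j (y + 1))
    (fun m => -2 * (2 * y + 1) * (j - m) * hahnTerm ℓ m j y)
    (by simp only [hahnTerm_zero, Nat.cast_zero]; ring)
    (fun m hm => hahnTerm_recurrence_step hm _ y)
  have boundary : -2 * (2 * y + 1) * ((j : ℂ) - ℓ) * hahnTerm ℓ ℓ j y = 0 := by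
    rcases hj.lt_or_eq with hj | rfl
    · rw [hahnTerm_eq_zero_of_lt_left hj, mul_zero]
    · rw [sub_self, mul_zero, zero_mul]
  simp only [sum_sub_distrib, ← mul_sum] at key
  rw [hahn, hahn, hahn]
  linear_combination key + boundary

theorem hahn_difference_equation {ℓ k : ℕ} (hk : k ≤ ℓ) (x : ℂ) :
    (x + 1) * (ℓ - x) * (hahn ℓ (x + 1) k - hahn ℓ x k)
        + x * (ℓ - x + 1) * (hahn ℓ (x - 1) k - hahn ℓ x k) =
      -(k * (k + 1) * hahn ℓ x k) := by
  have key := sum_range_succ_eq_of_telescoping (n := ℓ)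
    (fun m => (x + 1) * (ℓ - x) * (hahnTerm ℓ m (x + 1) k - hahnTerm ℓ m x k)
      + x * (ℓ - x + 1) * (hahnTerm ℓ m (x - 1) k - hahnTerm ℓ m x k)
      + k * (k + 1) * hahnTerm ℓ m x k)
    (fun m => (k * (k + 1) - m * (m + 1)) * hahnTerm ℓ m x k)
    (by simp only [hahnTerm_zero, Nat.cast_zero]; ring)
    (fun m hm => hahnTerm_difference_step hm x _)
  have boundary : ((k : ℂ) * (k + 1) - ℓ * (ℓ + 1)) * hahnTerm ℓ ℓ x k = 0 := by
    rcases hk.lt_or_eq with hk | rfl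
    · rw [hahnTerm_eq_zero_of_lt_right hk, mul_zero]
    · rw [sub_self, zero_mul]
  simp only [sum_add_distrib, sum_sub_distrib, ← mul_sum] at key
  rw [hahn, hahn, hahn]
  linear_combination key + boundary

theorem hahn_mixed_relation {ℓ j k : ℕ} (hj : j ≤ ℓ) (hk : k ≤ ℓ) :
    (2 * k + 1) * ((j + 1) * (ℓ - j) * (hahn ℓ (j + 1) k - hahn ℓ j k)
        - j * (ℓ - j + 1) * (hahn ℓ (j - 1) k - hahn ℓ j k)) =
      k * (k + 1) * (ℓ - k) * hahn ℓ j (k + 1) - k * (k + 1) * (ℓ + k + 1) * hahn ℓ j (k - 1) := by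
  have key := sum_range_succ_eq_of_telescoping (n := ℓ)
    (fun m => (2 * k + 1) * ((j + 1) * (ℓ - j) * (hahnTerm ℓ m (j + 1) k - hahnTerm ℓ m j k)
          - j * (ℓ - j + 1) * (hahnTerm ℓ m (j - 1) k - hahnTerm ℓ m j k))
        - k * (k + 1) * (ℓ - k) * hahnTerm ℓ m j (k + 1)
        + k * (k + 1) * (ℓ + k + 1) * hahnTerm ℓ m j (k - 1))
    (fun m => (2 * k + 1) * (k * (k + 1) - 2 * m * j + m * (m - 1)) * hahnTerm ℓ m j k)
    (by simp only [hahnTerm_zero, Nat.cast_zero]; ring)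
    (fun m hm => hahnTerm_mixed_step hm _ _)
  have boundary :
      (2 * k + 1) * ((k : ℂ) * (k + 1) - 2 * ℓ * j + ℓ * (ℓ - 1)) * hahnTerm ℓ ℓ j k = 0 := by
    rcases hk.lt_or_eq with hk | rfl
    · rw [hahnTerm_eq_zero_of_lt_right hk, mul_zero]
    rcases hj.lt_or_eq with hj | rfl
    · rw [hahnTerm_eq_zero_of_lt_left hj, mul_zero]
    ring
  simp only [sum_add_distrib, sum_sub_distrib, ← mul_sum] at key
  rw [hahn, hahn, hahn, hahn, hahn]
  linear_combination key + boundary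

def lowerShift (n : ℕ) (w : ℂ → ℂ) : Matrix (Fin (n + 1)) (Fin (n + 1)) ℂ :=
  of fun j k => if (k : ℕ) + 1 = j then w (j : ℕ) else 0

def upperShift (n : ℕ) (w : ℂ → ℂ) : Matrix (Fin (n + 1)) (Fin (n + 1)) ℂ :=
  of fun j k => if (j : ℕ) + 1 = k then w (j : ℕ) else 0

theorem sum_fin_ite_val_eq {M : Type*} [AddCommMonoid M] (n a : ℕ) (g : ℕ → M) :
    ∑ i : Fin (n + 1), (if (i : ℕ) = a then g i else 0) = if a ≤ n then g a else 0 := by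
  rw [Fin.sum_univ_eq_sum_range (fun i => if i = a then g i else 0), sum_ite_eq']
  simp only [mem_range, Nat.lt_succ_iff]

section Shifts

variable {n : ℕ} {w : ℂ → ℂ} (F : ℂ → ℂ → ℂ) (j k : Fin (n + 1))

theorem lowerShift_mul_apply (hw : w 0 = 0) :
    (lowerShift n w * of fun i k : Fin (n + 1) => F (i : ℕ) (k : ℕ)) j k =
      w (j : ℕ) * F ((j : ℕ) - 1) (k : ℕ) := by
  obtain ⟨_ | j, hj⟩ := j
  · simp [lowerShift, mul_apply, hw]
  · simp only [lowerShift, mul_apply, of_apply, ite_mul, zero_mul, Nat.add_right_cancel_iff]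
    rw [sum_fin_ite_val_eq n j fun i => w (j + 1 : ℕ) * F i k, if_pos (by omega)]
    simp

theorem upperShift_mul_apply (hw : w n = 0) :
    (upperShift n w * of fun i k : Fin (n + 1) => F (i : ℕ) (k : ℕ)) j k =
      w (j : ℕ) * F ((j : ℕ) + 1) (k : ℕ) := by
  simp only [upperShift, mul_apply, of_apply, ite_mul, zero_mul, eq_comm (a := (j : ℕ) + 1)]
  rw [sum_fin_ite_val_eq n _ fun i => w j * F i k]
  split_ifs with h
  · push_cast; rfl
  · rw [show (j : ℕ) = n by omega, hw, zero_mul]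

theorem mul_lowerShift_apply (hw : w (n + 1) = 0) :
    ((of fun i k : Fin (n + 1) => F (i : ℕ) (k : ℕ)) * lowerShift n w) j k =
      F (j : ℕ) ((k : ℕ) + 1) * w ((k : ℕ) + 1) := by
  simp only [lowerShift, mul_apply, of_apply, mul_ite, mul_zero, eq_comm (a := (k : ℕ) + 1)]
  rw [sum_fin_ite_val_eq n _ fun i => F j i * w i]
  split_ifs with h
  · push_cast; rfl
  · rw [show (k : ℕ) = n by omega, hw, mul_zero]

theorem mul_upperShift_apply (hw : w (-1) = 0) :
    ((of fun i k : Fin (n + 1) => F (i : ℕ) (k : ℕ)) * upperShift n w) j k =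
      F (j : ℕ) ((k : ℕ) - 1) * w ((k : ℕ) - 1) := by
  obtain ⟨_ | k, hk⟩ := k
  · simp [upperShift, mul_apply, hw]
  · simp only [upperShift, mul_apply, of_apply, mul_ite, mul_zero, Nat.add_right_cancel_iff]
    rw [sum_fin_ite_val_eq n k fun i => F j i * w i, if_pos (by omega)]
    simp

end Shifts

theorem hahnU_eq (ℓ : ℕ) : hahnU ℓ = of fun j k : Fin (ℓ + 1) => hahn ℓ (j : ℕ) (k : ℕ) := by
  ext j k
  refine sum_subset (range_subset_range.2 (by omega)) fun m hm hmin => ?_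
  rw [mem_range, Nat.lt_succ_iff, le_min_iff, not_and_or, not_le, not_le] at hmin
  rcases hmin with hj | hk
  · exact hahnTerm_eq_zero_of_lt_left hj _
  · exact hahnTerm_eq_zero_of_lt_right hk _

theorem hahnU_apply (ℓ : ℕ) (j k : Fin (ℓ + 1)) : hahnU ℓ j k = hahn ℓ (j : ℕ) (k : ℕ) := by
  rw [hahnU_eq, of_apply]

theorem Q0_eq (ℓ : ℕ) : Q0 ℓ = upperShift ℓ fun x => (x + 1) * (ℓ + x + 2) / (2 * x + 3) := rfl

theorem Q1_eq (ℓ : ℕ) : Q1 ℓ = lowerShift ℓ fun x => x * (ℓ - x + 1) / (2 * x - 1) := rfl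

theorem C0_eq (ℓ : ℕ) :
    C0 ℓ = lowerShift ℓ (fun x => x * (ℓ - x + 1)) -
      diagonal fun j : Fin (ℓ + 1) => ((j : ℕ) : ℂ) * (ℓ - (j : ℕ) + 1) := by
  ext j k
  simp only [C0, lowerShift, Matrix.sub_apply, diagonal_apply, of_apply]
  split_ifs <;> simp_all

theorem C1_eq (ℓ : ℕ) :
    C1 ℓ = upperShift ℓ (fun x => (x + 1) * (ℓ - x)) -
      diagonal fun j : Fin (ℓ + 1) => (((j : ℕ) : ℂ) + 1) * (ℓ - (j : ℕ)) := by
  ext j k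
  simp only [C1, upperShift, Matrix.sub_apply, diagonal_apply, of_apply]
  split_ifs <;> simp_all

theorem two_mul_natCast_add_one_ne_zero (k : ℕ) : 2 * (k : ℂ) + 1 ≠ 0 := by
  exact_mod_cast (2 * k).succ_ne_zero

section Entries

variable (ℓ : ℕ) (j k : Fin (ℓ + 1))

theorem hahnU_mul_Q0_apply :
    (2 * (k : ℕ) + 1) * (hahnU ℓ * Q0 ℓ) j k =
      (k : ℕ) * (ℓ + (k : ℕ) + 1) * hahn ℓ (j : ℕ) ((k : ℕ) - 1) := by
  have hk := two_mul_natCast_add_one_ne_zero k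
  rw [Q0_eq, hahnU_eq, mul_upperShift_apply _ _ _ (by ring),
    show 2 * ((k : ℕ) - 1 : ℂ) + 3 = 2 * (k : ℕ) + 1 by ring]
  field_simp
  ring

theorem hahnU_mul_Q1_apply :
    (2 * (k : ℕ) + 1) * (hahnU ℓ * Q1 ℓ) j k =
      ((k : ℕ) + 1) * (ℓ - (k : ℕ)) * hahn ℓ (j : ℕ) ((k : ℕ) + 1) := by
  have hk := two_mul_natCast_add_one_ne_zero k
  rw [Q1_eq, hahnU_eq, mul_lowerShift_apply _ _ _ (by ring),
    show 2 * ((k : ℕ) + 1 : ℂ) - 1 = 2 * (k : ℕ) + 1 by ring]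
  field_simp
  ring

theorem C0_mul_hahnU_apply :
    (C0 ℓ * hahnU ℓ) j k =
      (j : ℕ) * (ℓ - (j : ℕ) + 1) * (hahn ℓ ((j : ℕ) - 1) (k : ℕ) - hahn ℓ (j : ℕ) (k : ℕ)) := by
  rw [C0_eq, hahnU_eq, sub_mul, Matrix.sub_apply, lowerShift_mul_apply _ _ _ (by ring),
    diagonal_mul, of_apply]
  ring

theorem C1_mul_hahnU_apply :
    (C1 ℓ * hahnU ℓ) j k =
      ((j : ℕ) + 1) * (ℓ - (j : ℕ)) * (hahn ℓ ((j : ℕ) + 1) (k : ℕ) - hahn ℓ (j : ℕ) (k : ℕ)) := by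
  rw [C1_eq, hahnU_eq, sub_mul, Matrix.sub_apply, upperShift_mul_apply _ _ _ (by ring),
    diagonal_mul, of_apply]
  ring

end Entries

theorem A0_mul_hahnU (ℓ : ℕ) : A0 ℓ * hahnU ℓ = hahnU ℓ * (Q0 ℓ + Q1 ℓ) := by
  ext j k
  refine mul_left_cancel₀ (two_mul_natCast_add_one_ne_zero k) ?_
  rw [A0, diagonal_mul, hahnU_apply, mul_add, Matrix.add_apply]
  linear_combination hahn_recurrence j.is_le (k : ℕ)
    - hahnU_mul_Q0_apply ℓ j k - hahnU_mul_Q1_apply ℓ j k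

theorem C1_add_C0_mul_hahnU (ℓ : ℕ) : (C1 ℓ + C0 ℓ) * hahnU ℓ = -(hahnU ℓ * V0 ℓ) := by
  ext j k
  rw [add_mul, Matrix.add_apply, C0_mul_hahnU_apply, C1_mul_hahnU_apply, Matrix.neg_apply, V0,
    mul_diagonal, hahnU_apply]
  linear_combination hahn_difference_equation k.is_le ((j : ℕ) : ℂ)

theorem C1_sub_C0_mul_hahnU (ℓ : ℕ) :
    (C1 ℓ - C0 ℓ) * hahnU ℓ = hahnU ℓ * (Q1 ℓ * Jmat ℓ - Q0 ℓ * (Jmat ℓ + 1)) := by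
  ext j k
  refine mul_left_cancel₀ (two_mul_natCast_add_one_ne_zero k) ?_
  rw [Jmat, ← diagonal_one, diagonal_add, mul_sub, ← Matrix.mul_assoc, ← Matrix.mul_assoc, sub_mul,
    Matrix.sub_apply, Matrix.sub_apply, mul_diagonal, mul_diagonal, C0_mul_hahnU_apply,
    C1_mul_hahnU_apply]
  linear_combination hahn_mixed_relation j.is_le k.is_le
    - (k : ℕ) * hahnU_mul_Q1_apply ℓ j k + ((k : ℕ) + 1) * hahnU_mul_Q0_apply ℓ j k

/-- Lemma 3.7 (Hahn polynomial matrix identities): `A₀U = U(Q₀+Q₁)`,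
`(C₁+C₀)U = -U V₀`, and `(C₁-C₀)U = U(Q₁J - Q₀(J+1))`. -/
theorem hahn_matrix_identities (ℓ : ℕ) :
    A0 ℓ * hahnU ℓ = hahnU ℓ * (Q0 ℓ + Q1 ℓ) ∧
    (C1 ℓ + C0 ℓ) * hahnU ℓ = -(hahnU ℓ * V0 ℓ) ∧
    (C1 ℓ - C0 ℓ) * hahnU ℓ = hahnU ℓ * (Q1 ℓ * Jmat ℓ - Q0 ℓ * (Jmat ℓ + 1)) :=
  ⟨A0_mul_hahnU ℓ, C1_add_C0_mul_hahnU ℓ, C1_sub_C0_mul_hahnU ℓ⟩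

end Stmt0
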